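/- There is a universal constant C > 0 with the following property. Let d be an even positive integer, δ ≤ d/4 a positive integer, a and L positive integers with d = aL and 1 ≤ a < δ, m_1,…,m_K ∈ ℂ^d masks whose nonzero entries all lie in positions {1,…,δ}, and 0 < p ≤ q. Then ‖Y(x⁺) − Y(x⁻)‖₂² ≤ C·K·‖m‖_∞⁴·q²·p²·δ⁵/a, where ‖m‖_∞ := max_{1≤k≤K} ‖m_k‖_∞. -/

import Mathlib

open scoped BigOperators

noncomputable section

/-- Map an integer to `Fin d` by reduction mod `d` (requires `0 < d`). -/
def intToFin (d : ℕ) (hd : 0 < d) (z : ℤ) : Fin d :=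
  ⟨(z % (d : ℤ)).toNat, by
    have h1 : 0 ≤ z % (d : ℤ) := Int.emod_nonneg z (by exact_mod_cast hd.ne')
    have h2 : z % (d : ℤ) < (d : ℤ) := Int.emod_lt_of_pos z (by exact_mod_cast hd)
    omega⟩

/-- Circular shift: `(S_ℓ x)(n) = x(((n + ℓ - 1) mod d) + 1)` in 1-based indexing. -/
def shift {d : ℕ} (ℓ : ℤ) (x : Fin d → ℂ) : Fin d → ℂ :=
  fun i => x (intToFin d i.pos ((i : ℤ) + ℓ))

/-- `⟨u,v⟩ = ∑ u(n) conj(v(n))`. -/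
def innerC {d : ℕ} (u v : Fin d → ℂ) : ℂ := ∑ n, u n * (starRingEnd ℂ) (v n)

/-- `x ∼ x'` iff `x = e^{iθ} x'` for some real `θ`. -/
def phaseEquiv {d : ℕ} (x x' : Fin d → ℂ) : Prop :=
  ∃ θ : ℝ, x = fun n => Complex.exp (θ * Complex.I) * x' n

/-- Euclidean norm on `ℂ^d`. -/
def norm2 {d : ℕ} (x : Fin d → ℂ) : ℝ := Real.sqrt (∑ n, ‖x n‖ ^ 2)

/-- `D₂(x,x') = min_θ ‖x - e^{iθ} x'‖₂`. -/
def D2 {d : ℕ} (x x' : Fin d → ℂ) : ℝ :=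
  ⨅ θ : ℝ, norm2 (fun n => x n - Complex.exp (θ * Complex.I) * x' n)

/-- `C_{p,q} = {x : p ≤ |x(n)| ≤ q for all n}`. -/
def Cpq (d : ℕ) (p q : ℝ) : Set (Fin d → ℂ) :=
  {x | ∀ n, p ≤ ‖x n‖ ∧ ‖x n‖ ≤ q}

/-- `‖m‖_∞ = max_k ‖m_k‖_∞`. -/
def maskSup {d K : ℕ} (m : Fin K → Fin d → ℂ) : ℝ :=
  ⨆ k, ⨆ n, ‖m k n‖

/-- The measurement map `Z(x)_{k,ℓ} = |⟨S_{ℓa} m_k, x⟩|`, `1 ≤ k ≤ K`, `1 ≤ ℓ ≤ L`. -/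
def Zmap {d K : ℕ} (L : ℕ) (m : Fin K → Fin d → ℂ) (a : ℕ) (x : Fin d → ℂ) :
    EuclideanSpace ℝ (Fin K × Fin L) :=
  WithLp.toLp 2 fun kl => ‖innerC (shift ((((kl.2 : ℕ) + 1) * a : ℕ) : ℤ) (m kl.1)) x‖

/-- The measurement map `Y(x)_{k,ℓ} = |⟨S_{ℓa} m_k, x⟩|²`. -/
def Ymap {d K : ℕ} (L : ℕ) (m : Fin K → Fin d → ℂ) (a : ℕ) (x : Fin d → ℂ) :
    EuclideanSpace ℝ (Fin K × Fin L) :=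
  WithLp.toLp 2 fun kl => ‖innerC (shift ((((kl.2 : ℕ) + 1) * a : ℕ) : ℤ) (m kl.1)) x‖ ^ 2

/-- The vectors `x^{±}` (sign `ε = ±1`): `q` on positions `1,…,d/2-δ`, `p` on
`d/2-δ+1,…,d/2`, `±q` on `d/2+1,…,d-δ`, and `p` on `d-δ+1,…,d`. -/
def xpm (d δ : ℕ) (p q ε : ℝ) : Fin d → ℂ :=
  fun i => if (i : ℕ) < d / 2 - δ then (q : ℂ)
    else if (i : ℕ) < d / 2 then (p : ℂ)
    else if (i : ℕ) < d - δ then ((ε * q : ℝ) : ℂ)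
    else (p : ℂ)

/-- The difference of outer products `x x^* - x' x'^*`. -/
def outerDiff {d : ℕ} (x x' : Fin d → ℂ) : Matrix (Fin d) (Fin d) ℂ :=
  Matrix.of fun i j => x i * star (x j) - x' i * star (x' j)

lemma outerDiff_isHermitian {d : ℕ} (x x' : Fin d → ℂ) :
    (outerDiff x x').IsHermitian := by
  unfold Matrix.IsHermitian
  ext i j
  simp [outerDiff, Matrix.conjTranspose_apply, star_sub, star_mul, star_star, mul_comm]

/-- `d₁(x,x') = ‖x x^* - x' x'^*‖₁`, the sum of the singular values (for a Hermitian
matrix, the sum of the absolute values of its eigenvalues). -/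
def d1 {d : ℕ} (x x' : Fin d → ℂ) : ℝ :=
  ∑ i, |(outerDiff_isHermitian x x').eigenvalues i|

/-!
The vectors `x⁺` and `x⁻` agree on the first half and on the last `δ` coordinates and are
opposite in between. For `z = ⟨v, x⁺⟩` and `w = ⟨v, x⁻⟩` one has
`|‖z‖² - ‖w‖²| ≤ ‖z - w‖ ‖z + w‖`, and a shifted mask `v` only sees a window of `δ`
consecutive coordinates. Unless that window straddles `d / 2` or `d - δ`, `x⁺ - x⁻` or
`x⁺ + x⁻` vanishes on it, so the entry of `Y(x⁺) - Y(x⁻)` is zero; if it does straddle, the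
window lies in the last `d / 2 + δ` coordinates, where `|x⁺ + x⁻| ≤ 2p`, so the entry is at
most `4 δ² ‖m‖∞² p q`. The straddling shifts `(ℓ + 1) a` are multiples of `a` in two intervals
of length `δ`, hence there are at most `4 δ / a` of them.
-/

open Finset

lemma abs_sq_norm_sub_sq_norm_le {F : Type*} [NormedAddCommGroup F] [InnerProductSpace ℝ F]
    (x y : F) : |‖x‖ ^ 2 - ‖y‖ ^ 2| ≤ ‖x - y‖ * ‖x + y‖ := by
  have h : inner ℝ (x - y) (x + y) = ‖x‖ ^ 2 - ‖y‖ ^ 2 := by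
    rw [inner_sub_left, inner_add_right, inner_add_right, real_inner_self_eq_norm_sq,
      real_inner_self_eq_norm_sq, real_inner_comm x y]
    ring
  exact h ▸ abs_real_inner_le_norm _ _

lemma norm_le_maskSup {d K : ℕ} (m : Fin K → Fin d → ℂ) (k : Fin K) (n : Fin d) :
    ‖m k n‖ ≤ maskSup m :=
  (le_ciSup (Finite.bddAbove_range _) n).trans
    (le_ciSup (Finite.bddAbove_range (fun k => ⨆ n, ‖m k n‖)) k)

section innerC

variable {d : ℕ}

lemma innerC_sub_right (u x y : Fin d → ℂ) : innerC u (x - y) = innerC u x - innerC u y := by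
  simp only [innerC, Pi.sub_apply, map_sub, mul_sub, sum_sub_distrib]

lemma innerC_add_right (u x y : Fin d → ℂ) : innerC u (x + y) = innerC u x + innerC u y := by
  simp only [innerC, Pi.add_apply, map_add, mul_add, sum_add_distrib]

lemma innerC_eq_zero_of_support {u x : Fin d → ℂ} (h : ∀ n, u n ≠ 0 → x n = 0) :
    innerC u x = 0 := by
  refine sum_eq_zero fun n _ => ?_
  by_cases hn : u n = 0
  · rw [hn, zero_mul]
  · rw [h n hn, map_zero, mul_zero]

lemma norm_innerC_le {u x : Fin d → ℂ} {M B : ℝ} (hu : ∀ n, ‖u n‖ ≤ M)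
    (hx : ∀ n, u n ≠ 0 → ‖x n‖ ≤ B) :
    ‖innerC u x‖ ≤ #{n | u n ≠ 0} * (M * B) := by
  calc ‖innerC u x‖ = ‖∑ n ∈ {n | u n ≠ 0}, u n * (starRingEnd ℂ) (x n)‖ := by
        rw [innerC, sum_filter_of_ne fun n _ h => left_ne_zero_of_mul h]
    _ ≤ ∑ n ∈ {n | u n ≠ 0}, ‖u n‖ * ‖x n‖ := by
        refine (norm_sum_le _ _).trans (sum_le_sum fun n _ => ?_)
        rw [norm_mul, Complex.norm_conj]
    _ ≤ ∑ n ∈ {n | u n ≠ 0}, M * B := by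
        refine sum_le_sum fun n hn => ?_
        exact mul_le_mul (hu n) (hx n (mem_filter.mp hn).2) (norm_nonneg _)
          ((norm_nonneg _).trans (hu n))
    _ = #{n | u n ≠ 0} * (M * B) := by rw [sum_const, nsmul_eq_mul]

end innerC

section shift

variable {d δ s : ℕ} {u : Fin d → ℂ}

lemma shift_natCast_apply (s : ℕ) (u : Fin d → ℂ) (n : Fin d) :
    shift (s : ℤ) u n = u ⟨((n : ℕ) + s) % d, Nat.mod_lt _ n.pos⟩ := by
  simp only [shift, intToFin]
  congr

lemma card_support_shift_le (hu : ∀ n, u n ≠ 0 → (n : ℕ) < δ) :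
    #{n | shift (s : ℤ) u n ≠ 0} ≤ δ := by
  simpa using card_le_card_of_injOn (t := range δ) (fun n : Fin d => ((n : ℕ) + s) % d)
    (fun n hn => mem_range.mpr (hu _ (by simpa [shift_natCast_apply] using hn)))
    (fun n₁ _ n₂ _ h => Fin.ext <| by
      have := Nat.ModEq.add_right_cancel' s h
      rwa [Nat.ModEq, Nat.mod_eq_of_lt n₁.isLt, Nat.mod_eq_of_lt n₂.isLt] at this)

lemma exists_of_shift_ne_zero (hs : s ≤ d) (hu : ∀ n, u n ≠ 0 → (n : ℕ) < δ) {n : Fin d}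
    (hn : shift (s : ℤ) u n ≠ 0) : ∃ j < δ, (n : ℕ) + s = j ∨ (n : ℕ) + s = j + d := by
  rw [shift_natCast_apply] at hn
  refine ⟨((n : ℕ) + s) % d, hu _ hn, ?_⟩
  rcases lt_or_ge ((n : ℕ) + s) d with h | h
  · exact Or.inl (Nat.mod_eq_of_lt h).symm
  · have : ((n : ℕ) + s) % d = (n : ℕ) + s - d := by
      rw [Nat.mod_eq_sub_mod h, Nat.mod_eq_of_lt (by omega)]
    omega

end shift

section xpm

variable {d δ : ℕ} {p q : ℝ} {n : Fin d}

lemma xpm_sub_xpm_eq_zero (h : (n : ℕ) < d / 2 ∨ d - δ ≤ n) :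
    xpm d δ p q 1 n - xpm d δ p q (-1) n = 0 := by
  unfold xpm
  split_ifs <;> first | omega | ring

lemma xpm_add_xpm_eq_zero (h₁ : d / 2 ≤ (n : ℕ)) (h₂ : (n : ℕ) < d - δ) :
    xpm d δ p q 1 n + xpm d δ p q (-1) n = 0 := by
  unfold xpm
  split_ifs <;> first | omega | (push_cast; ring)

lemma norm_xpm_sub_xpm_le (hq : 0 ≤ q) : ‖xpm d δ p q 1 n - xpm d δ p q (-1) n‖ ≤ 2 * q := by
  unfold xpm
  split_ifs <;> first | omega | norm_num [← two_mul, abs_of_nonneg, hq]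

lemma norm_xpm_add_xpm_le (hp : 0 ≤ p) (h : d / 2 - δ ≤ (n : ℕ)) :
    ‖xpm d δ p q 1 n + xpm d δ p q (-1) n‖ ≤ 2 * p := by
  unfold xpm
  split_ifs <;> first | omega | norm_num [← two_mul, abs_of_nonneg, hp]

end xpm

/-- For a mask supported in `[0, δ)`, the support of its shift by `s` lies in the window
`[d - s, d - s + δ)` (mod `d`); this says the window straddles `d / 2` or `d - δ`. -/
def StraddlesSignChange (d δ s : ℕ) : Prop :=
  (d / 2 < s ∧ s < d / 2 + δ) ∨ (δ < s ∧ s < 2 * δ)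

instance (d δ s : ℕ) : Decidable (StraddlesSignChange d δ s) :=
  inferInstanceAs (Decidable (_ ∨ _))

lemma sq_sub_sq_norm_innerC_shift_xpm_le {d δ s : ℕ} {p q M : ℝ} {u : Fin d → ℂ}
    (hd : Even d) (hδd : 4 * δ ≤ d) (hs : s ≤ d) (hp : 0 ≤ p) (hq : 0 ≤ q) (hM0 : 0 ≤ M)
    (hu : ∀ n, u n ≠ 0 → (n : ℕ) < δ) (hM : ∀ n, ‖u n‖ ≤ M) :
    (‖innerC (shift (s : ℤ) u) (xpm d δ p q 1)‖ ^ 2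
        - ‖innerC (shift (s : ℤ) u) (xpm d δ p q (-1))‖ ^ 2) ^ 2
      ≤ if StraddlesSignChange d δ s then (4 * δ ^ 2 * M ^ 2 * p * q) ^ 2 else 0 := by
  set v := shift (s : ℤ) u
  set x := xpm d δ p q 1
  set y := xpm d δ p q (-1)
  have hd2 := Nat.even_iff.mp hd
  have hwin (n) (hn : v n ≠ 0) := exists_of_shift_ne_zero hs hu hn
  have hkey : |‖innerC v x‖ ^ 2 - ‖innerC v y‖ ^ 2|
      ≤ ‖innerC v (x - y)‖ * ‖innerC v (x + y)‖ := by
    rw [innerC_sub_right, innerC_add_right]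
    exact abs_sq_norm_sub_sq_norm_le _ _
  rw [← sq_abs]
  split_ifs with h
  · have hbound {w : Fin d → ℂ} {B : ℝ} (hB : 0 ≤ B) (hw : ∀ n, v n ≠ 0 → ‖w n‖ ≤ B) :
        ‖innerC v w‖ ≤ δ * (M * B) :=
      (norm_innerC_le (fun n => hM _) hw).trans <| mul_le_mul_of_nonneg_right
        (by exact_mod_cast card_support_shift_le hu) (mul_nonneg hM0 hB)
    have hsub : ‖innerC v (x - y)‖ ≤ δ * (M * (2 * q)) :=
      hbound (by positivity) fun n _ => norm_xpm_sub_xpm_le hq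
    have hadd : ‖innerC v (x + y)‖ ≤ δ * (M * (2 * p)) := hbound (by positivity) fun n hn => by
      obtain ⟨j, hj, hn⟩ := hwin n hn
      exact norm_xpm_add_xpm_le hp (by unfold StraddlesSignChange at h; omega)
    calc |‖innerC v x‖ ^ 2 - ‖innerC v y‖ ^ 2| ^ 2
        ≤ (‖innerC v (x - y)‖ * ‖innerC v (x + y)‖) ^ 2 := by gcongr
      _ ≤ ((δ * (M * (2 * q))) * (δ * (M * (2 * p)))) ^ 2 := by gcongr
      _ = (4 * δ ^ 2 * M ^ 2 * p * q) ^ 2 := by ring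
  · have hzero : innerC v (x - y) = 0 ∨ innerC v (x + y) = 0 := by
      unfold StraddlesSignChange at h
      by_cases hmid : 2 * δ ≤ s ∧ s ≤ d / 2
      · refine Or.inr (innerC_eq_zero_of_support fun n hn => ?_)
        obtain ⟨j, hj, hn⟩ := hwin n hn
        exact xpm_add_xpm_eq_zero (by omega) (by omega)
      · refine Or.inl (innerC_eq_zero_of_support fun n hn => ?_)
        obtain ⟨j, hj, hn⟩ := hwin n hn
        exact xpm_sub_xpm_eq_zero (by omega)
    have : |‖innerC v x‖ ^ 2 - ‖innerC v y‖ ^ 2| = 0 :=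
      le_antisymm (hkey.trans_eq (by rcases hzero with h0 | h0 <;> simp [h0])) (abs_nonneg _)
    rw [this, sq, mul_zero]

lemma card_mul_lt_of_mul_mem_Ioo {ι : Type*} {S : Finset ι} {f : ι → ℕ} {a u δ : ℕ} (ha : 0 < a)
    (hf : Set.InjOn f S) (hS : ∀ i ∈ S, u < f i * a ∧ f i * a < u + δ) : #S * a < δ + a := by
  have hcard : #S ≤ (u + δ) / a - u / a := by
    simpa using card_le_card_of_injOn (t := Ioc (u / a) ((u + δ) / a)) f
      (fun i hi => mem_Ioc.mpr ⟨(Nat.div_lt_iff_lt_mul ha).mpr (hS i hi).1,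
        (Nat.le_div_iff_mul_le ha).mpr (hS i hi).2.le⟩) hf
  have hlo := Nat.lt_div_mul_add (a := u) ha
  have hhi := Nat.div_mul_le_self (u + δ) a
  calc #S * a ≤ ((u + δ) / a - u / a) * a := Nat.mul_le_mul_right a hcard
    _ = (u + δ) / a * a - u / a * a := Nat.sub_mul ..
    _ < δ + a := by omega

lemma card_straddlesSignChange_mul_le {d δ a L : ℕ} (ha : 0 < a) (haδ : a ≤ δ) :
    #{ℓ : Fin L | StraddlesSignChange d δ (((ℓ : ℕ) + 1) * a)} * a ≤ 4 * δ := by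
  have hcount (u : ℕ) := card_mul_lt_of_mul_mem_Ioo (f := fun ℓ : Fin L => (ℓ : ℕ) + 1)
    (S := {ℓ : Fin L | u < ((ℓ : ℕ) + 1) * a ∧ ((ℓ : ℕ) + 1) * a < u + δ}) ha
    (fun _ _ _ _ h => Fin.ext (by simpa using h)) (fun ℓ hℓ => (mem_filter.mp hℓ).2)
  have hsplit : #{ℓ : Fin L | StraddlesSignChange d δ (((ℓ : ℕ) + 1) * a)}
      ≤ #{ℓ : Fin L | d / 2 < ((ℓ : ℕ) + 1) * a ∧ ((ℓ : ℕ) + 1) * a < d / 2 + δ}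
        + #{ℓ : Fin L | δ < ((ℓ : ℕ) + 1) * a ∧ ((ℓ : ℕ) + 1) * a < δ + δ} := by
    refine (card_le_card fun ℓ hℓ => ?_).trans (card_union_le _ _)
    have h := (mem_filter.mp hℓ).2
    unfold StraddlesSignChange at h
    simp only [mem_filter, mem_union, mem_univ, true_and]
    omega
  have := Nat.mul_le_mul_right a hsplit
  have := hcount (d / 2)
  have := hcount δ
  rw [add_mul] at *
  omega

/-- `‖Y(x⁺) - Y(x⁻)‖₂² ≤ C K ‖m‖_∞⁴ q² p² δ⁵ / a`. -/
theorem Y_diff_bound : ∃ C : ℝ, 0 < C ∧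
    ∀ (d δ a L K : ℕ) (m : Fin K → Fin d → ℂ) (p q : ℝ),
      0 < d → Even d → 0 < δ → 4 * δ ≤ d → 0 < a → 0 < L → d = a * L → 1 ≤ a → a < δ →
      (∀ k n, m k n ≠ 0 → (n : ℕ) < δ) →
      0 < p → p ≤ q →
      ‖Ymap L m a (xpm d δ p q 1) - Ymap L m a (xpm d δ p q (-1))‖ ^ 2
        ≤ C * (K : ℝ) * maskSup m ^ 4 * q ^ 2 * p ^ 2 * (δ : ℝ) ^ 5 / (a : ℝ) := by
  refine ⟨64, by norm_num, ?_⟩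
  intro d δ a L K m p q _ hd _ hδd ha _ hdaL _ haδ hm hp hpq
  set M := maskSup m
  set B := 4 * (δ : ℝ) ^ 2 * M ^ 2 * p * q
  set bad := #{ℓ : Fin L | StraddlesSignChange d δ (((ℓ : ℕ) + 1) * a)}
  have hM0 : 0 ≤ M := Real.iSup_nonneg fun k => Real.iSup_nonneg fun n => norm_nonneg _
  have hentry (kl : Fin K × Fin L) :
      (Ymap L m a (xpm d δ p q 1) kl - Ymap L m a (xpm d δ p q (-1)) kl) ^ 2
        ≤ if StraddlesSignChange d δ (((kl.2 : ℕ) + 1) * a) then B ^ 2 else 0 :=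
    sq_sub_sq_norm_innerC_shift_xpm_le hd hδd
      (by rw [hdaL, mul_comm a]; exact Nat.mul_le_mul_right a kl.2.isLt)
      hp.le (hp.le.trans hpq) hM0 (hm kl.1) (norm_le_maskSup m kl.1)
  have hbad : (bad : ℝ) ≤ 4 * δ / a := by
    rw [le_div_iff₀ (by exact_mod_cast ha)]
    exact_mod_cast card_straddlesSignChange_mul_le ha haδ.le
  calc ‖Ymap L m a (xpm d δ p q 1) - Ymap L m a (xpm d δ p q (-1))‖ ^ 2
      = ∑ kl, (Ymap L m a (xpm d δ p q 1) kl - Ymap L m a (xpm d δ p q (-1)) kl) ^ 2 := by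
        simp [EuclideanSpace.norm_sq_eq]
    _ ≤ ∑ kl : Fin K × Fin L,
          if StraddlesSignChange d δ (((kl.2 : ℕ) + 1) * a) then B ^ 2 else 0 :=
        sum_le_sum fun kl _ => hentry kl
    _ = K * (bad * B ^ 2) := by
        rw [Fintype.sum_prod_type]
        simp [sum_ite, bad]
    _ ≤ K * (4 * δ / a * B ^ 2) := by gcongr
    _ = 64 * K * M ^ 4 * q ^ 2 * p ^ 2 * δ ^ 5 / a := by
        rw [mul_div_assoc]
        ring
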